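/- arXiv:2209.12612 — 7 statements merged into one kernel-verified Lean document; each statement's English description precedes it below -/
import Mathlib

section
/- The bicyclic monoid B = ⟨a,b | ab = 1⟩ satisfies Adian's identity: for all x, y in B, xy²x(xy)xy²x = xy²x(yx)xy²x. -/
/-!
The bicyclic monoid acts on `ℕ` with `b` the successor and `a` the truncated predecessor, and
`bᵐaⁿ` acts by `k ↦ (k - n) + m`. So an element is determined by its degree `m - n` (a
homomorphism to `ℤ`) and its height `m` (the image of `0`), and heights compose like max-plus
affine maps: `h(xy) = max (h x) (h y + deg x)`. Both sides of the identity are `u g u` with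
`u = xy²x` and `g ∈ {xy, yx}` of the same degree, and
`h(u g u) = max (h u) (h g + deg u) (h u + deg u + deg g)`. The middle term never wins: `h u`
already bounds `h x`, `h y + deg x`, `h y + deg (xy)` and `h x + deg (xy²)`, so `h g + deg u` is
at most `h u` or `h u + deg u + deg g`, according to the sign of `deg g`.
-/
/-- The defining relation of the bicyclic monoid `⟨a, b | ab = 1⟩`,
with `a` encoded as `true` and `b` as `false`. -/
def bicyclicRel : FreeMonoid Bool → FreeMonoid Bool → Prop :=
  fun u v => u = FreeMonoid.of true * FreeMonoid.of false ∧ v = 1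

/-- The bicyclic monoid `⟨a, b | ab = 1⟩`. -/
abbrev Bicyclic : Type := PresentedMonoid bicyclicRel

namespace Bicyclic

def a : Bicyclic := PresentedMonoid.of bicyclicRel true

def b : Bicyclic := PresentedMonoid.of bicyclicRel false

theorem a_mul_b : a * b = 1 :=
  PresentedMonoid.mk_eq_mk_of_rel (x := FreeMonoid.of true * FreeMonoid.of false) ⟨rfl, rfl⟩

theorem a_pow_mul_b_pow (n p : ℕ) : a ^ n * b ^ p = b ^ (p - n) * a ^ (n - p) := by
  induction n generalizing p with
  | zero => simp
  | succ n ih =>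
    cases p with
    | zero => simp
    | succ p =>
      calc a ^ (n + 1) * b ^ (p + 1) = a ^ n * (a * b) * b ^ p := by
            rw [pow_succ, pow_succ']
            simp only [mul_assoc]
        _ = b ^ (p + 1 - (n + 1)) * a ^ (n + 1 - (p + 1)) := by
            rw [a_mul_b, mul_one, ih, Nat.add_sub_add_right, Nat.add_sub_add_right]

theorem b_pow_mul_a_pow_mul_b_pow_mul_a_pow (m n p q : ℕ) :
    b ^ m * a ^ n * (b ^ p * a ^ q) = b ^ (m + (p - n)) * a ^ (q + (n - p)) := by
  rw [mul_assoc, ← mul_assoc (a ^ n), a_pow_mul_b_pow, add_comm q, pow_add, pow_add]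
  simp only [mul_assoc]

theorem exists_eq_b_pow_mul_a_pow (x : Bicyclic) : ∃ m n : ℕ, x = b ^ m * a ^ n := by
  have hx : x ∈ Submonoid.closure (Set.range (PresentedMonoid.of bicyclicRel)) := by
    rw [PresentedMonoid.closure_range_of]
    trivial
  induction hx using Submonoid.closure_induction_left with
  | one => exact ⟨0, 0, by simp⟩
  | mul_left g hg y _ ih =>
    obtain ⟨c, rfl⟩ := hg
    obtain ⟨m, n, rfl⟩ := ih
    obtain ⟨i, j, hc⟩ : ∃ i j : ℕ, PresentedMonoid.of bicyclicRel c = b ^ i * a ^ j := by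
      cases c
      exacts [⟨1, 0, by simp [b]⟩, ⟨0, 1, by simp [a]⟩]
    exact ⟨_, _, by rw [hc, b_pow_mul_a_pow_mul_b_pow_mul_a_pow]⟩

def act : Bicyclic →* Function.End ℕ :=
  PresentedMonoid.lift (fun c => if c then Nat.pred else Nat.succ) (by
    rintro _ _ ⟨rfl, rfl⟩
    rfl)

theorem act_b_pow_mul_a_pow (m n k : ℕ) : act (b ^ m * a ^ n) k = k - n + m := by
  rw [map_mul, map_pow, map_pow]
  exact (Nat.succ_iterate _ m).trans (congrArg (· + m) (Nat.pred_iterate k n))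

def degree : Bicyclic →* Multiplicative ℤ :=
  PresentedMonoid.lift (fun c => if c then Multiplicative.ofAdd (-1) else Multiplicative.ofAdd 1)
    (by
      rintro _ _ ⟨rfl, rfl⟩
      rfl)

theorem degree_b_pow_mul_a_pow (m n : ℕ) : (degree (b ^ m * a ^ n)).toAdd = m - n := by
  rw [map_mul, map_pow, map_pow]
  simp only [degree, a, b, PresentedMonoid.lift_of]
  simp [sub_eq_add_neg]

def height (x : Bicyclic) : ℕ := act x 0

theorem act_apply_eq_max (x : Bicyclic) (k : ℕ) :
    (act x k : ℤ) = max (k + (degree x).toAdd) (height x) := by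
  obtain ⟨m, n, rfl⟩ := exists_eq_b_pow_mul_a_pow x
  rw [height, act_b_pow_mul_a_pow, act_b_pow_mul_a_pow, degree_b_pow_mul_a_pow]
  omega

theorem height_mul (x y : Bicyclic) :
    (height (x * y) : ℤ) = max (height x : ℤ) (height y + (degree x).toAdd) := by
  rw [height, map_mul]
  exact (act_apply_eq_max x (act y 0)).trans (max_comm _ _)

theorem eq_of_degree_eq_of_height_eq {x y : Bicyclic} (hd : degree x = degree y)
    (hh : height x = height y) : x = y := by
  obtain ⟨m, n, rfl⟩ := exists_eq_b_pow_mul_a_pow x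
  obtain ⟨p, q, rfl⟩ := exists_eq_b_pow_mul_a_pow y
  have hd' := congrArg Multiplicative.toAdd hd
  rw [degree_b_pow_mul_a_pow, degree_b_pow_mul_a_pow] at hd'
  simp only [height, act_b_pow_mul_a_pow] at hh
  obtain ⟨rfl, rfl⟩ : m = p ∧ n = q := by omega
  rfl

theorem height_mul_mul (u g : Bicyclic) : (height (u * g * u) : ℤ) =
    max (max (height u : ℤ) (height g + (degree u).toAdd))
      (height u + (degree u).toAdd + (degree g).toAdd) := by
  rw [height_mul, height_mul, map_mul, toAdd_mul, add_assoc]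

theorem height_mul_mul_eq_of_le {u g g' : Bicyclic} (hd : degree g = degree g')
    (hg : (height g : ℤ) + (degree u).toAdd ≤
      max (height u : ℤ) (height u + (degree u).toAdd + (degree g).toAdd))
    (hg' : (height g' : ℤ) + (degree u).toAdd ≤
      max (height u : ℤ) (height u + (degree u).toAdd + (degree g).toAdd)) :
    height (u * g * u) = height (u * g' * u) := by
  have h₁ := height_mul_mul u g
  have h₂ := height_mul_mul u g'
  rw [← hd] at h₂
  omega

end Bicyclic

open Bicyclic

/-- The bicyclic monoid satisfies Adian's identity
`xy²x(xy)xy²x = xy²x(yx)xy²x`. -/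
theorem bicyclic_satisfies_adian_identity (x y : Bicyclic) :
    x * y ^ 2 * x * (x * y) * (x * y ^ 2 * x) =
      x * y ^ 2 * x * (y * x) * (x * y ^ 2 * x) := by
  set u := x * y ^ 2 * x
  have hd : degree (x * y) = degree (y * x) := by rw [map_mul, map_mul, mul_comm]
  refine eq_of_degree_eq_of_height_eq (by simp only [map_mul, hd])
    (height_mul_mul_eq_of_le hd ?_ ?_) <;>
  · simp only [u, height_mul, map_mul, toAdd_mul, sq]
    omega
end

section
/- The monoid of 2×2 upper triangular tropical matrices over ℤ ∪ {-∞} satisfies Adian's identity: for all matrices X, Y, XY²X(XY)XY²X = XY²X(YX)XY²X. -/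
/-!
Write `X = [a b; 0 c]`, `Y = [d e; 0 f]` and `U = XY²X = [p u; 0 q]`. Both sides are `U W U` with
`W = XY` or `W = YX`, which share the diagonal `(ad, cf)`, so they can differ only in the corner
`p·ad·u ⊕ p·w·q ⊕ u·cf·q`, where `w = ae ⊕ bf` or `w = bd ⊕ ce`. Each monomial of `p·w·q` has cube
`v²v'` or `vv'²` for some monomial `v` of `p·ad·u` and `v'` of `u·cf·q`; in max-plus arithmetic
`3x = 2y + z` forces `x ≤ max y z`, so `p·w·q` is absorbed and both corners equal `p·ad·u ⊕ u·cf·q`.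
-/

/-- The max-plus tropical semiring `ℤ ∪ {-∞}`: tropical addition is `max`,
tropical multiplication is `+`, and `(0 : T)` is the tropical zero `-∞`. -/
abbrev T : Type := Tropical (WithTop ℤᵒᵈ)

/-- The element of the tropical semiring corresponding to the integer `k`. -/
def t (k : ℤ) : T := Tropical.trop ((OrderDual.toDual k : ℤᵒᵈ) : WithTop ℤᵒᵈ)

namespace Tropical

variable {α : Type*} [AddCancelCommMonoid α] [LinearOrder α] [IsOrderedAddMonoid α]

/- The order on `Tropical (WithTop α)` is that of `WithTop α`, so for `T` it is the reverse of the
order of `ℤ ∪ {-∞}`: `v + w ≤ m` says that `m` is at most the maximum of `v` and `w`. -/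
theorem add_le_of_pow_three_eq {m v w : Tropical (WithTop α)} (h : m ^ 3 = v ^ 2 * w) :
    v + w ≤ m := by
  by_contra! hlt
  obtain ⟨hv, hw⟩ : m < v ∧ m < w := lt_min_iff.mp hlt
  have h' := congrArg untrop (show m * m * m = v * v * w by rw [← pow_three', h, sq])
  simp only [untrop_mul] at h'
  exact h'.not_lt (WithTop.add_lt_add (WithTop.add_lt_add hv hv) hw)

theorem mul_add_mul_le_of_pow_three_eq {p q r s u n m : Tropical (WithTop α)} (hn : u ≤ n)
    (h : m ^ 3 = (p * r * n) ^ 2 * (n * s * q) ∨ m ^ 3 = (n * s * q) ^ 2 * (p * r * n)) :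
    p * r * u + u * s * q ≤ m := by
  calc p * r * u + u * s * q ≤ p * r * n + n * s * q := by gcongr
    _ ≤ m := by
      rcases h with h | h
      · exact add_le_of_pow_three_eq h
      · rw [add_comm]
        exact add_le_of_pow_three_eq h

theorem add_add_eq_of_add_le {R : Type*} [LinearOrder R] {x y z : Tropical R} (h : x + z ≤ y) :
    x + y + z = x + z := by
  rw [add_right_comm]
  exact add_eq_left h

theorem adian_outer_terms_le_middle (a b c d e f : Tropical (WithTop α))
    {u w : Tropical (WithTop α)}
    (hu : u = a * b * d ^ 2 + a * c * d * e + a * c * e * f + b * c * f ^ 2)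
    (hw : w = a * e + b * f ∨ w = b * d + c * e) :
    (a * d) ^ 2 * (a * d) * u + u * (c * f) * (c * f) ^ 2 ≤ (a * d) ^ 2 * w * (c * f) ^ 2 := by
  have habd : u ≤ a * b * d ^ 2 := by
    rw [hu]; exact (min_le_left _ _).trans <| (min_le_left _ _).trans (min_le_left _ _)
  have hacde : u ≤ a * c * d * e := by
    rw [hu]; exact (min_le_left _ _).trans <| (min_le_left _ _).trans (min_le_right _ _)
  have hacef : u ≤ a * c * e * f := by
    rw [hu]; exact (min_le_left _ _).trans (min_le_right _ _)
  have hbcf : u ≤ b * c * f ^ 2 := by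
    rw [hu]; exact min_le_right _ _
  rcases hw with rfl | rfl <;> rw [mul_add ((a * d) ^ 2), add_mul _ _ ((c * f) ^ 2)]
  · exact le_min (mul_add_mul_le_of_pow_three_eq hacef (.inl (by ring)))
      (mul_add_mul_le_of_pow_three_eq hbcf (.inl (by ring)))
  · exact le_min (mul_add_mul_le_of_pow_three_eq habd (.inr (by ring)))
      (mul_add_mul_le_of_pow_three_eq hacde (.inr (by ring)))

end Tropical

namespace Matrix

variable {R : Type*} [Semiring R]

theorem eq_upperTriangular_fin_two {M : Matrix (Fin 2) (Fin 2) R} (h : M 1 0 = 0) :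
    M = !![M 0 0, M 0 1; 0, M 1 1] :=
  (eta_fin_two M).trans (by rw [h])

theorem upperTriangular_mul_fin_two (a b c a' b' c' : R) :
    !![a, b; 0, c] * !![a', b'; 0, c'] = !![a * a', a * b' + b * c'; 0, c * c'] := by
  simp

theorem upperTriangular_mul_mul_self_fin_two (p u q r w s : R) :
    !![p, u; 0, q] * !![r, w; 0, s] * !![p, u; 0, q] =
      !![p * r * p, p * r * u + p * w * q + u * s * q; 0, q * s * q] := by
  simp only [upperTriangular_mul_fin_two, add_mul, mul_assoc, add_assoc]

end Matrix

open Matrix Tropical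

/-- The monoid of `2 × 2` upper triangular tropical matrices (those whose
`(2,1)` entry is `-∞`) satisfies Adian's identity `xy²x(xy)xy²x = xy²x(yx)xy²x`. -/
theorem upperTriangular_satisfies_adian_identity
    (X Y : Matrix (Fin 2) (Fin 2) T) (hX : X 1 0 = 0) (hY : Y 1 0 = 0) :
    X * Y ^ 2 * X * (X * Y) * (X * Y ^ 2 * X) =
      X * Y ^ 2 * X * (Y * X) * (X * Y ^ 2 * X) := by
  obtain ⟨a, b, c, rfl⟩ : ∃ a b c, X = !![a, b; 0, c] := ⟨_, _, _, eq_upperTriangular_fin_two hX⟩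
  obtain ⟨d, e, f, rfl⟩ : ∃ d e f, Y = !![d, e; 0, f] := ⟨_, _, _, eq_upperTriangular_fin_two hY⟩
  have hU : !![a, b; 0, c] * !![d, e; 0, f] ^ 2 * !![a, b; 0, c] =
      !![(a * d) ^ 2, a * b * d ^ 2 + a * c * d * e + a * c * e * f + b * c * f ^ 2;
        0, (c * f) ^ 2] := by
    simp only [sq, upperTriangular_mul_fin_two]
    ring_nf
  have hXY : !![a, b; 0, c] * !![d, e; 0, f] = !![a * d, a * e + b * f; 0, c * f] :=
    upperTriangular_mul_fin_two a b c d e f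
  have hYX : !![d, e; 0, f] * !![a, b; 0, c] = !![a * d, b * d + c * e; 0, c * f] := by
    simp only [upperTriangular_mul_fin_two]
    ring_nf
  rw [hU, hXY, hYX, upperTriangular_mul_mul_self_fin_two, upperTriangular_mul_mul_self_fin_two,
    add_add_eq_of_add_le (adian_outer_terms_le_middle a b c d e f rfl (.inl rfl)),
    add_add_eq_of_add_le (adian_outer_terms_le_middle a b c d e f rfl (.inr rfl))]
end

section
/- The bicyclic monoid embeds into the monoid of 2×2 upper triangular tropical integer matrices: the semigroup generated by A = [[0,1],[-∞,1]] and B = [[0,0],[-∞,-1]] under tropical matrix multiplication is isomorphic to the bicyclic monoid ⟨a,b | ab = 1⟩. -/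
def A : Matrix (Fin 2) (Fin 2) T := !![t 0, t 1; 0, t 1]

def B : Matrix (Fin 2) (Fin 2) T := !![t 0, t 0; 0, t (-1)]

namespace BicyclicAux

/-! ### basic tropical lemmas -/

lemma t_mul (x y : ℤ) : t x * t y = t (x + y) := by
  simp [t, ← Tropical.trop_add, ← WithTop.coe_add]

lemma t_add (x y : ℤ) : t x + t y = t (max x y) := by
  apply Tropical.untrop_injective
  rw [t, t, t, Tropical.untrop_add, toDual_max, WithTop.coe_min]
  rfl

lemma t_inj : Function.Injective t := by
  intro x y h
  have := Tropical.trop_injective h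
  exact OrderDual.toDual.injective (WithTop.coe_injective this)

/-! ### the matrix family -/

def Mt (i j : ℕ) : Matrix (Fin 2) (Fin 2) T := !![t 0, t j; 0, t ((j : ℤ) - i)]

lemma Mt_mul (i j k l : ℕ) :
    Mt i j * Mt k l = Mt (i + (k - j)) (l + (j - k)) := by
  have h1 : max (l:ℤ) ((j:ℤ) + ((l:ℤ) - k)) = (l:ℤ) + ((j - k : ℕ) : ℤ) := by
    rcases le_total j k with h | h
    · rw [max_eq_left (by omega), Nat.sub_eq_zero_of_le h]; omega
    · rw [max_eq_right (by omega)]; push_cast [h]; omega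
  have h2 : ((j:ℤ) - i) + ((l:ℤ) - k)
      = ((l + (j - k) : ℕ) : ℤ) - ((i + (k - j) : ℕ) : ℤ) := by
    push_cast; omega
  rw [Mt, Mt, Mt, Matrix.mul_fin_two]
  simp only [zero_mul, mul_zero, add_zero, zero_add, t_mul, t_add, h2]
  norm_num [h1]

lemma A_eq : A = Mt 0 1 := by norm_num [A, Mt]

lemma B_eq : B = Mt 1 0 := by norm_num [B, Mt]

lemma Mt_inj : Function.Injective fun p : ℕ × ℕ => Mt p.1 p.2 := by
  rintro ⟨i, j⟩ ⟨k, l⟩ h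
  simp only [Mt] at h
  have h1 : t (j:ℤ) = t (l:ℤ) := by simpa using congr_fun (congr_fun h 0) 1
  have h2 : t ((j:ℤ) - i) = t ((l:ℤ) - k) := by simpa using congr_fun (congr_fun h 1) 1
  have e1 := t_inj h1
  have e2 := t_inj h2
  have : j = l := by exact_mod_cast e1
  subst this
  have : i = k := by omega
  simp [this]

lemma Mt_mem (i j : ℕ) : Mt i j ∈ Subsemigroup.closure {A, B} := by
  have hA : A ∈ Subsemigroup.closure {A, B} := Subsemigroup.subset_closure (by simp)
  have hB : B ∈ Subsemigroup.closure {A, B} := Subsemigroup.subset_closure (by simp)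
  induction i with
  | zero =>
    induction j with
    | zero =>
      have : Mt 0 0 = A * B := by rw [A_eq, B_eq, Mt_mul]
      rw [this]; exact mul_mem hA hB
    | succ n ih =>
      have : Mt 0 (n + 1) = Mt 0 n * A := by rw [A_eq, Mt_mul, Nat.zero_sub, Nat.sub_zero, Nat.add_zero, Nat.add_comm 1 n]
      rw [this]; exact mul_mem ih hA
  | succ n ih =>
    have : Mt (n + 1) j = B * Mt n j := by rw [B_eq, Mt_mul, Nat.sub_zero, Nat.zero_sub, Nat.add_comm 1 n]; norm_num
    rw [this]; exact mul_mem hB ih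

lemma Mt_surj (x : Matrix (Fin 2) (Fin 2) T) (hx : x ∈ Subsemigroup.closure {A, B}) :
    ∃ i j, x = Mt i j := by
  induction hx using Subsemigroup.closure_induction with
  | mem y hy =>
    rcases hy with rfl | rfl
    · exact ⟨0, 1, A_eq⟩
    · exact ⟨1, 0, B_eq⟩
  | mul y z _ _ hy hz =>
    obtain ⟨i, j, rfl⟩ := hy
    obtain ⟨k, l, rfl⟩ := hz
    exact ⟨_, _, Mt_mul i j k l⟩

/-! ### the model monoid with bicyclic multiplication -/

structure Bi : Type where
  i : ℕ
  j : ℕ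

instance : Mul Bi := ⟨fun p q => ⟨p.i + (q.i - p.j), q.j + (p.j - q.i)⟩⟩
instance : One Bi := ⟨⟨0, 0⟩⟩

lemma bi_mul (p q : Bi) : p * q = ⟨p.i + (q.i - p.j), q.j + (p.j - q.i)⟩ := rfl

lemma bi_one : (1 : Bi) = ⟨0, 0⟩ := rfl

instance : Monoid Bi where
  mul_assoc p q r := by
    rcases p with ⟨a, b⟩; rcases q with ⟨c, d⟩; rcases r with ⟨e, f⟩
    simp only [bi_mul, Bi.mk.injEq]
    omega
  one_mul p := by rcases p with ⟨a, b⟩; simp only [bi_one, bi_mul, Bi.mk.injEq]; omega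
  mul_one p := by rcases p with ⟨a, b⟩; simp only [bi_one, bi_mul, Bi.mk.injEq]; omega

lemma bB_pow (i : ℕ) : (⟨1, 0⟩ : Bi) ^ i = ⟨i, 0⟩ := by
  induction i with
  | zero => rfl
  | succ n ih => rw [pow_succ, ih, bi_mul]; simp

lemma aB_pow (j : ℕ) : (⟨0, 1⟩ : Bi) ^ j = ⟨0, j⟩ := by
  induction j with
  | zero => rfl
  | succ n ih => rw [pow_succ, ih, bi_mul]; simp [Nat.add_comm]

/-! ### the Bicyclic monoid -/

def a : Bicyclic := PresentedMonoid.of bicyclicRel true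
def b : Bicyclic := PresentedMonoid.of bicyclicRel false

lemma ab_one : a * b = 1 := by
  show PresentedMonoid.mk bicyclicRel (FreeMonoid.of true) *
      PresentedMonoid.mk bicyclicRel (FreeMonoid.of false) = 1
  rw [← map_mul, show (1 : Bicyclic) = PresentedMonoid.mk bicyclicRel 1 from rfl]
  exact Quotient.sound (ConGen.Rel.of _ _ ⟨rfl, rfl⟩)

lemma a_mul_b_pow (k : ℕ) : a * b ^ (k + 1) = b ^ k := by
  rw [pow_succ', ← mul_assoc, ab_one, one_mul]

lemma pow_a_mul_pow_b (j k : ℕ) : a ^ j * b ^ k = b ^ (k - j) * a ^ (j - k) := by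
  induction j generalizing k with
  | zero => simp
  | succ n ih =>
    cases k with
    | zero => simp
    | succ m =>
      rw [pow_succ, mul_assoc, a_mul_b_pow, ih]
      congr 1 <;> congr 1 <;> omega

/-- the map `Bi → Bicyclic` as a monoid hom -/
def psi : Bi →* Bicyclic where
  toFun p := b ^ p.i * a ^ p.j
  map_one' := by simp [bi_one]
  map_mul' p q := by
    rcases p with ⟨i, j⟩
    rcases q with ⟨k, l⟩
    rw [bi_mul]
    show b ^ (i + (k - j)) * a ^ (l + (j - k)) = (b ^ i * a ^ j) * (b ^ k * a ^ l)
    have hl : a ^ (l + (j - k)) = a ^ (j - k) * a ^ l := by rw [add_comm, pow_add]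
    rw [pow_add, hl, mul_assoc, ← mul_assoc (b ^ (k - j)), ← pow_a_mul_pow_b]
    simp only [mul_assoc]

/-- the map `Bicyclic → Bi` as a monoid hom -/
def phi : Bicyclic →* Bi :=
  PresentedMonoid.lift (fun x : Bool => if x then (⟨0, 1⟩ : Bi) else ⟨1, 0⟩)
    (by
      rintro u v ⟨rfl, rfl⟩
      simp only [map_mul, map_one, FreeMonoid.lift_eval_of, if_true, if_false]
      rfl)

lemma phi_a : phi a = ⟨0, 1⟩ := PresentedMonoid.lift_of _ _
lemma phi_b : phi b = ⟨1, 0⟩ := PresentedMonoid.lift_of _ _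

lemma phi_psi (p : Bi) : phi (psi p) = p := by
  rcases p with ⟨i, j⟩
  show phi (b ^ i * a ^ j) = _
  rw [map_mul, map_pow, map_pow, phi_a, phi_b, bB_pow, aB_pow, bi_mul]
  simp only [Bi.mk.injEq]
  omega

lemma psi_phi (x : Bicyclic) : psi (phi x) = x := by
  have : psi.comp phi = MonoidHom.id Bicyclic := by
    apply PresentedMonoid.ext
    rintro (_ | _)
    · show psi (phi b) = b
      rw [phi_b]
      show b ^ 1 * a ^ 0 = b
      simp
    · show psi (phi a) = a
      rw [phi_a]
      show b ^ 0 * a ^ 1 = a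
      simp
  exact DFunLike.congr_fun this x

/-! ### assembling the isomorphism -/

noncomputable def equiv1 : Bicyclic ≃* Bi :=
  MulEquiv.ofBijective (phi : Bicyclic →* Bi)
    ⟨fun x y h => by rw [← psi_phi x, h, psi_phi], fun p => ⟨psi p, phi_psi p⟩⟩

def f2 : Bi →ₙ* (Subsemigroup.closure {A, B} : Subsemigroup (Matrix (Fin 2) (Fin 2) T)) where
  toFun p := ⟨Mt p.i p.j, Mt_mem p.i p.j⟩
  map_mul' p q := by
    rcases p with ⟨i, j⟩; rcases q with ⟨k, l⟩
    exact Subtype.ext (Mt_mul i j k l).symm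

lemma f2_bij : Function.Bijective f2 := by
  constructor
  · rintro ⟨i, j⟩ ⟨k, l⟩ h
    have := @Mt_inj (i, j) (k, l) (congr_arg Subtype.val h)
    simp only [Prod.mk.injEq] at this
    simp [this.1, this.2]
  · rintro ⟨x, hx⟩
    obtain ⟨i, j, rfl⟩ := Mt_surj x hx
    exact ⟨⟨i, j⟩, rfl⟩

end BicyclicAux

/-- The subsemigroup of `2 × 2` (upper triangular) tropical matrices generated by
`A = [[0,1],[-∞,1]]` and `B = [[0,0],[-∞,-1]]` is isomorphic to the bicyclic monoid. -/
theorem bicyclic_iso_tropical :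
    Nonempty (Bicyclic ≃* (Subsemigroup.closure {A, B} :
      Subsemigroup (Matrix (Fin 2) (Fin 2) T))) :=
  ⟨BicyclicAux.equiv1.trans (MulEquiv.ofBijective BicyclicAux.f2 BicyclicAux.f2_bij)⟩
end

section
/- No cyclic group of order p ≥ 2 embeds into the multiplicative monoid of n×n upper triangular tropical integer matrices, for any n ≥ 1. -/
theorem MulHom.map_pow_succ {M N : Type*} [Monoid M] [Monoid N] (f : M →ₙ* N) (a : M) (n : ℕ) :
    f (a ^ (n + 1)) = f a ^ (n + 1) := by
  induction n with
  | zero => simp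
  | succ n ih => rw [pow_succ a, map_mul, ih, ← pow_succ]

namespace Tropical

section Order

variable {R : Type*} [LinearOrder R]

theorem le_add_iff {x y z : Tropical R} : z ≤ x + y ↔ z ≤ x ∧ z ≤ y := le_min_iff

theorem le_add_add_iff {x y w z : Tropical R} : z ≤ x + y + w ↔ z ≤ x ∧ z ≤ y ∧ z ≤ w := by
  rw [le_add_iff, le_add_iff, and_assoc]

theorem eq_apply_one_of_periodic [Add R] {x : ℕ → Tropical R} {a b M : Tropical R} {p : ℕ}
    (hp : 0 < p) (hx : ∀ m₁ m₂, 0 < m₁ → 0 < m₂ → x (m₁ + m₂) = a * x m₂ + x m₁ * b + M)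
    (hper : ∀ m, 0 < m → x (m + p) = x m) {m : ℕ} (hm : 0 < m) : x m = x 1 := by
  have E₁ : x 1 = a * x p + x 1 * b + M :=
    (hper 1 one_pos).symm.trans (hx 1 p one_pos hp)
  have E₂ : x 1 = a * x 1 + x p * b + M :=
    (add_comm p 1 ▸ hper 1 one_pos).symm.trans (hx p 1 hp one_pos)
  have E₃ : x p = a * x p + x p * b + M := (hper p hp).symm.trans (hx p p hp hp)
  -- `x p = x (p + p)` is also of the form `x (1 + m₂)`, which brings in `x 1 * b`.
  have E₄ : x p = a * x (2 * p - 1) + x 1 * b + M := by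
    rw [← hx 1 (2 * p - 1) one_pos (by omega), show 1 + (2 * p - 1) = p + p by omega, hper p hp]
  have h₁ := le_add_add_iff.1 E₁.le
  have h₂ := le_add_add_iff.1 E₂.le
  have h₃ := le_add_add_iff.1 E₃.le
  have h₄ := le_add_add_iff.1 E₄.le
  have hxp : x p = x 1 := le_antisymm
    (E₁ ▸ le_add_add_iff.2 ⟨h₃.1, h₄.2.1, h₃.2.2⟩)
    (E₃ ▸ le_add_add_iff.2 ⟨h₁.1, h₂.2.1, h₁.2.2⟩)
  induction m, hm using Nat.le_induction with
  | base => rfl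
  | succ m hm ih =>
    rw [hx m 1 hm one_pos, ih]
    simpa only [hxp] using E₂.symm

end Order

theorem isIdempotentElem_of_pow_succ_eq {α : Type*} [AddMonoid α] [IsRightCancelAdd α]
    [IsAddTorsionFree α] {a : Tropical (WithTop α)} {p : ℕ} (hp : 0 < p) (ha : a ^ (p + 1) = a) :
    IsIdempotentElem a := by
  obtain ⟨a, rfl⟩ := surjective_trop a
  induction a using WithTop.recTopCoe with
  | top => rw [IsIdempotentElem, ← trop_add, WithTop.top_add]
  | coe z =>
    rw [← trop_nsmul, trop_inj_iff, ← WithTop.coe_nsmul, WithTop.coe_inj, _root_.succ_nsmul,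
      _root_.add_eq_right, nsmul_eq_zero_iff_right hp.ne'] at ha
    rw [ha, WithTop.coe_zero, trop_zero]; exact IsIdempotentElem.one

end Tropical

namespace Matrix.IsUpperTriangular

variable {ι R : Type*} [Fintype ι] [LinearOrder ι]

theorem diag_mul [NonUnitalNonAssocSemiring R] {P Q : Matrix ι ι R} (hP : P.IsUpperTriangular)
    (hQ : Q.IsUpperTriangular) : (P * Q).diag = P.diag * Q.diag := by
  ext i
  rw [diag_apply, mul_apply]
  refine (Fintype.sum_eq_single i fun k hk => ?_).trans rfl
  rcases hk.lt_or_gt with hki | hik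
  · rw [hP hki, zero_mul]
  · rw [hQ hik, mul_zero]

theorem diag_pow [Semiring R] {B : Matrix ι ι R} (hB : B.IsUpperTriangular) (m : ℕ) :
    (B ^ m).diag = B.diag ^ m := by
  induction m with
  | zero => ext; simp
  | succ m ih => rw [pow_succ, diag_mul (hB.pow m) hB, ih, pow_succ]

theorem mul_apply_of_lt [LocallyFiniteOrder ι] [NonUnitalNonAssocSemiring R] {P Q : Matrix ι ι R}
    (hP : P.IsUpperTriangular) (hQ : Q.IsUpperTriangular) {i j : ι} (hij : i < j) :
    (P * Q) i j = P i i * Q i j + P i j * Q j j + ∑ k ∈ Finset.Ioo i j, P i k * Q k j := by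
  have hIcc : (P * Q) i j = ∑ k ∈ Finset.Icc i j, P i k * Q k j := by
    rw [mul_apply]
    refine (Finset.sum_subset (Finset.subset_univ _) fun k _ hk => ?_).symm
    rcases lt_or_ge k i with hki | hik
    · rw [hP hki, zero_mul]
    · rw [hQ (lt_of_not_ge fun hkj => hk (Finset.mem_Icc.2 ⟨hik, hkj⟩)), mul_zero]
  rw [hIcc, ← Finset.Ioc_insert_left hij.le, Finset.sum_insert Finset.left_notMem_Ioc,
    ← Finset.Ioo_insert_right hij, Finset.sum_insert Finset.right_notMem_Ioo]
  abel

theorem isIdempotentElem_of_pow_succ_eq [LocallyFiniteOrder ι] {α : Type*} [AddCommGroup α]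
    [LinearOrder α] [IsOrderedAddMonoid α] {B : Matrix ι ι (Tropical (WithTop α))}
    (hB : B.IsUpperTriangular) {p : ℕ} (hp : 0 < p) (hBp : B ^ (p + 1) = B) :
    IsIdempotentElem B := by
  have hper : ∀ m, 0 < m → B ^ (m + p) = B ^ m := by
    rintro (_ | m) hm
    · exact absurd hm (lt_irrefl 0)
    · rw [show m + 1 + p = m + (p + 1) by omega, pow_add, hBp, pow_succ]
  have hdiag : ∀ i m, 0 < m → (B ^ m) i i = B i i := by
    intro i m hm
    have hpow_diag : ∀ m, (B ^ m) i i = B i i ^ m := fun m => congrFun (diag_pow hB m) i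
    have hBii : B i i ^ (p + 1) = B i i := by rw [← hpow_diag, hBp]
    rw [hpow_diag, ← Nat.sub_add_cancel hm,
      (Tropical.isIdempotentElem_of_pow_succ_eq hp hBii).pow_succ_eq]
  have hpow : ∀ i j m, 0 < m → (B ^ m) i j = B i j := by
    intro i j
    induction j using WellFoundedLT.induction generalizing i with | _ j ihj
    induction i using WellFoundedGT.induction with | _ i ihi
    intro m hm
    rcases lt_trichotomy i j with hij | rfl | hji
    · have hrec : ∀ m₁ m₂, 0 < m₁ → 0 < m₂ → (B ^ (m₁ + m₂)) i j =
          B i i * (B ^ m₂) i j + (B ^ m₁) i j * B j j + ∑ k ∈ Finset.Ioo i j, B i k * B k j := by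
        intro m₁ m₂ h₁ h₂
        rw [pow_add, mul_apply_of_lt (hB.pow m₁) (hB.pow m₂) hij, hdiag i m₁ h₁, hdiag j m₂ h₂]
        refine congrArg _ (Finset.sum_congr rfl fun k hk => ?_)
        rw [ihj k (Finset.mem_Ioo.1 hk).2 i m₁ h₁, ihi k (Finset.mem_Ioo.1 hk).1 m₂ h₂]
      simpa only [pow_one] using Tropical.eq_apply_one_of_periodic (x := fun m => (B ^ m) i j)
        hp hrec (fun m hm => by rw [hper m hm]) hm
    · exact hdiag i m hm
    · rw [hB.pow m hji, hB hji]
  ext i j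
  exact (sq B).symm ▸ hpow i j 2 two_pos

end Matrix.IsUpperTriangular

theorem no_cyclic_group_in_UT_general (n p : ℕ) (hp : 2 ≤ p)
    (G : Type) [Group G] (hG : Nat.card G = p) :
    ¬ ∃ f : G →ₙ* Matrix (Fin n) (Fin n) T,
        Function.Injective f ∧ ∀ g : G, ∀ i j : Fin n, j < i → f g i j = 0 := by
  rintro ⟨f, hf, hUT⟩
  have : Finite G := Nat.finite_of_card_ne_zero (by omega)
  have : Nontrivial G := Finite.one_lt_card_iff_nontrivial.1 (by omega)
  obtain ⟨g, hg⟩ := exists_ne (1 : G)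
  have hfg : f g ^ (orderOf g + 1) = f g := by
    rw [← f.map_pow_succ, pow_succ, pow_orderOf_eq_one, one_mul]
  have hidem : IsIdempotentElem (f g) :=
    Matrix.IsUpperTriangular.isIdempotentElem_of_pow_succ_eq (fun i j => hUT g i j)
      (orderOf_pos g) hfg
  exact hg (mul_eq_left.1 (hf (by rw [map_mul, hidem.eq])))

/-- No cyclic group of order `p ≥ 2` embeds into the monoid of `n × n` upper
triangular tropical matrices (for any `n ≥ 1`): there is no injective semigroup
homomorphism from such a group whose image consists of upper triangular matrices. -/
theorem no_cyclic_group_in_UT (n p : ℕ) (hn : 1 ≤ n) (hp : 2 ≤ p)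
    (G : Type) [Group G] [IsCyclic G] (hG : Nat.card G = p) :
    ¬ ∃ f : G →ₙ* Matrix (Fin n) (Fin n) T,
        Function.Injective f ∧ ∀ g : G, ∀ i j : Fin n, j < i → f g i j = 0 :=
  no_cyclic_group_in_UT_general n p hp G hG
end

section
/- In the monoid M₆⁽ᵏ⁾ = ⟨a,b | ab = bᵏ⟩ (k ≥ 1), every element is equal to a unique word of the form b^α a^β with α, β ≥ 0, and multiplication is given by (b^{α₁}a^{β₁})(b^{α₂}a^{β₂}) = b^{α₁+β₁(k-1)+α₂} a^{β₂} if α₂ ≠ 0, and b^{α₁} a^{β₁+β₂} if α₂ = 0. -/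
/-- The defining relation of `M₆⁽ᵏ⁾ = ⟨a, b | ab = bᵏ⟩`, with `a` encoded as `true`
and `b` as `false`. -/
def rel6 (k : ℕ) : FreeMonoid Bool → FreeMonoid Bool → Prop :=
  fun u v => u = FreeMonoid.of true * FreeMonoid.of false ∧ v = FreeMonoid.of false ^ k

/-!
Left multiplication by `a` turns `b^(n+1) a^β` into `b^(n+k) a^β` and `a^β` into `a^(β+1)`, so
every element has the form `b^α a^β`, and pushing `a^β` past `b^α` gives the multiplication rule.
For uniqueness, `M₆⁽ᵏ⁾` acts on `ℕ × ℕ` by the same rule read on exponent pairs (in `ab`, the `a`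
acts on a pair with `α ≥ 1`, where it adds `k - 1`, so the relation holds), and `b^α a^β`
sends `(0, 0)` to `(α, β)`.
-/

section PowMulPow

variable {M : Type*} [Monoid M] {a b : M} {k : ℕ}

theorem mul_pow_succ_of_mul_eq_pow (h : a * b = b ^ k) (n : ℕ) : a * b ^ (n + 1) = b ^ (n + k) := by
  rw [pow_succ', ← mul_assoc, h, ← pow_add, add_comm]

theorem pow_mul_pow_of_mul_eq_pow (h : a * b = b ^ k) (hk : 1 ≤ k) (β : ℕ) {α : ℕ} (hα : α ≠ 0) :
    a ^ β * b ^ α = b ^ (α + β * (k - 1)) := by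
  induction β generalizing α with
  | zero => simp
  | succ β ih =>
    obtain ⟨n, rfl⟩ := Nat.exists_eq_add_one_of_ne_zero hα
    rw [pow_succ, mul_assoc, mul_pow_succ_of_mul_eq_pow h, ih (by omega)]
    congr 1
    obtain ⟨j, rfl⟩ := Nat.exists_eq_add_of_le hk
    simp only [Nat.add_sub_cancel_left]
    ring

theorem exists_eq_pow_mul_pow_of_mem_closure (h : a * b = b ^ k) {x : M}
    (hx : x ∈ Submonoid.closure {a, b}) : ∃ p : ℕ × ℕ, x = b ^ p.1 * a ^ p.2 := by
  induction hx using Submonoid.closure_induction_left with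
  | one => exact ⟨(0, 0), by simp⟩
  | mul_left x hx _ _ ih =>
    obtain ⟨⟨α, β⟩, rfl⟩ := ih
    rcases hx with rfl | rfl
    · rcases α with _ | n
      · exact ⟨(0, β + 1), by simp [pow_succ']⟩
      · exact ⟨(n + k, β), by rw [← mul_assoc, mul_pow_succ_of_mul_eq_pow h]⟩
    · exact ⟨(α + 1, β), by rw [← mul_assoc, ← pow_succ']⟩

end PowMulPow

theorem rel6_of_true_mul_of_false (k : ℕ) :
    PresentedMonoid.of (rel6 k) true * PresentedMonoid.of (rel6 k) false =
      PresentedMonoid.of (rel6 k) false ^ k := by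
  have h := PresentedMonoid.mk_eq_mk_of_rel (rels := rel6 k) ⟨rfl, rfl⟩
  rw [map_mul, map_pow] at h
  exact h

/-- Left multiplication by `a` (`true`) and `b` (`false`) on exponent pairs of `b^α a^β`. -/
def rel6Action (k : ℕ) (x : Bool) : Function.End (ℕ × ℕ) :=
  fun p => if x then (if p.1 = 0 then (0, p.2 + 1) else (p.1 + k - 1, p.2)) else (p.1 + 1, p.2)

theorem rel6Action_false_pow_apply (k n : ℕ) (p : ℕ × ℕ) :
    (rel6Action k false ^ n) p = (p.1 + n, p.2) := by
  induction n with
  | zero => rfl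
  | succ n ih =>
    rw [pow_succ']
    change rel6Action k false ((rel6Action k false ^ n) p) = _
    simp [ih, rel6Action, add_assoc]

theorem rel6Action_true_pow_apply (k n β : ℕ) :
    (rel6Action k true ^ n) (0, β) = (0, β + n) := by
  induction n with
  | zero => rfl
  | succ n ih =>
    rw [pow_succ']
    change rel6Action k true ((rel6Action k true ^ n) (0, β)) = _
    simp [ih, rel6Action, add_assoc]

theorem rel6Action_rel (k : ℕ) (u v : FreeMonoid Bool) (h : rel6 k u v) :
    FreeMonoid.lift (rel6Action k) u = FreeMonoid.lift (rel6Action k) v := by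
  obtain ⟨rfl, rfl⟩ := h
  funext p
  rw [map_mul, map_pow, FreeMonoid.lift_eval_of, FreeMonoid.lift_eval_of,
    rel6Action_false_pow_apply]
  change rel6Action k true (rel6Action k false p) = _
  simp [rel6Action]

noncomputable def rel6ToEnd (k : ℕ) : PresentedMonoid (rel6 k) →* Function.End (ℕ × ℕ) :=
  PresentedMonoid.lift (rel6Action k) (rel6Action_rel k)

theorem rel6ToEnd_pow_mul_pow_apply_zero (k α β : ℕ) :
    rel6ToEnd k (PresentedMonoid.of (rel6 k) false ^ α * PresentedMonoid.of (rel6 k) true ^ β)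
      (0, 0) = (α, β) := by
  rw [map_mul, map_pow, map_pow]
  change (rel6Action k false ^ α) ((rel6Action k true ^ β) (0, 0)) = _
  rw [rel6Action_true_pow_apply, rel6Action_false_pow_apply]
  simp

theorem rel6_pow_mul_pow_injective (k : ℕ) :
    Function.Injective fun p : ℕ × ℕ =>
      PresentedMonoid.of (rel6 k) false ^ p.1 * PresentedMonoid.of (rel6 k) true ^ p.2 := by
  intro p q h
  simpa only [rel6ToEnd_pow_mul_pow_apply_zero] using congr_arg (rel6ToEnd k · (0, 0)) h

/-- In `M₆⁽ᵏ⁾ = ⟨a, b | ab = bᵏ⟩` (`k ≥ 1`), every element is equal to a unique word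
`b^α a^β`, and multiplication is given by
`(b^{α₁}a^{β₁})(b^{α₂}a^{β₂}) = b^{α₁+β₁(k-1)+α₂} a^{β₂}` if `α₂ ≠ 0`, and
`b^{α₁} a^{β₁+β₂}` if `α₂ = 0`. -/
theorem M6k_normal_form (k : ℕ) (hk : 1 ≤ k) :
    (∀ x : PresentedMonoid (rel6 k), ∃! p : ℕ × ℕ,
        x = PresentedMonoid.of (rel6 k) false ^ p.1 *
          PresentedMonoid.of (rel6 k) true ^ p.2) ∧
      ∀ α₁ β₁ α₂ β₂ : ℕ,
        (α₂ ≠ 0 →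
          (PresentedMonoid.of (rel6 k) false ^ α₁ * PresentedMonoid.of (rel6 k) true ^ β₁) *
            (PresentedMonoid.of (rel6 k) false ^ α₂ * PresentedMonoid.of (rel6 k) true ^ β₂) =
          PresentedMonoid.of (rel6 k) false ^ (α₁ + β₁ * (k - 1) + α₂) *
            PresentedMonoid.of (rel6 k) true ^ β₂) ∧
        (α₂ = 0 →
          (PresentedMonoid.of (rel6 k) false ^ α₁ * PresentedMonoid.of (rel6 k) true ^ β₁) *
            (PresentedMonoid.of (rel6 k) false ^ α₂ * PresentedMonoid.of (rel6 k) true ^ β₂) =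
          PresentedMonoid.of (rel6 k) false ^ α₁ *
            PresentedMonoid.of (rel6 k) true ^ (β₁ + β₂)) := by
  set a := PresentedMonoid.of (rel6 k) true
  set b := PresentedMonoid.of (rel6 k) false
  have hab : a * b = b ^ k := rel6_of_true_mul_of_false k
  refine ⟨fun x => ?_, fun α₁ β₁ α₂ β₂ => ⟨fun hα₂ => ?_, fun hα₂ => ?_⟩⟩
  · have hx : x ∈ Submonoid.closure {a, b} := by
      rw [Set.pair_comm, ← Bool.range_eq, PresentedMonoid.closure_range_of]
      exact Submonoid.mem_top x
    obtain ⟨p, hp⟩ := exists_eq_pow_mul_pow_of_mem_closure hab hx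
    exact ⟨p, hp, fun q hq => rel6_pow_mul_pow_injective k (hq.symm.trans hp)⟩
  · rw [mul_assoc, ← mul_assoc (a ^ β₁), pow_mul_pow_of_mul_eq_pow hab hk β₁ hα₂, ← mul_assoc,
      ← pow_add, add_comm α₂, add_assoc]
  · rw [hα₂, pow_zero, one_mul, mul_assoc, pow_add]
end

section
/- The monoid M₃ = ⟨a,b | aba = b⟩ is not commutative; more specifically, ab ≠ ba in M₃. -/
/-- The defining relation of `M₃ = ⟨a, b | aba = b⟩`, with `a` encoded as `true`
and `b` as `false`. -/
def rel3 : FreeMonoid Bool → FreeMonoid Bool → Prop :=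
  fun u v => u = FreeMonoid.of true * FreeMonoid.of false * FreeMonoid.of true ∧
    v = FreeMonoid.of false

open DihedralGroup in
/-- Interpretation of the generators in `D₃`: `a ↦ r 1`, `b ↦ sr 0`. -/
def f3 : Bool → DihedralGroup 3 := fun x => if x then r 1 else sr 0

open DihedralGroup in
lemma f3_rel : ∀ u v : FreeMonoid Bool, rel3 u v →
    FreeMonoid.lift f3 u = FreeMonoid.lift f3 v := by
  rintro u v ⟨rfl, rfl⟩
  simp [f3, r_mul_sr, sr_mul_r]

/-- The monoid `M₃ = ⟨a, b | aba = b⟩` is not commutative; more specifically,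
`ab ≠ ba` in `M₃`. -/
theorem M3_not_commutative :
    (¬ ∀ x y : PresentedMonoid rel3, x * y = y * x) ∧
      PresentedMonoid.of rel3 true * PresentedMonoid.of rel3 false ≠
        PresentedMonoid.of rel3 false * PresentedMonoid.of rel3 true := by
  have key : PresentedMonoid.of rel3 true * PresentedMonoid.of rel3 false ≠
      PresentedMonoid.of rel3 false * PresentedMonoid.of rel3 true := by
    intro h
    have := congrArg (PresentedMonoid.lift f3 f3_rel) h
    simp only [map_mul, PresentedMonoid.lift_of] at this
    revert this; decide
  exact ⟨fun h => key (h _ _), key⟩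
end

section
/- The monoid M₃ = ⟨a,c | aca = c⟩ embeds into the monoid M₄ = ⟨a,b | aba² = ba⟩ via the map sending the generators a ↦ a and c ↦ ba. -/
/-- The defining relation of `M₄ = ⟨a, b | aba² = ba⟩`, with `a` encoded as `true`
and `b` as `false`. -/
def rel4 : FreeMonoid Bool → FreeMonoid Bool → Prop :=
  fun u v =>
    u = FreeMonoid.of true * FreeMonoid.of false * FreeMonoid.of true * FreeMonoid.of true ∧
      v = FreeMonoid.of false * FreeMonoid.of true

/-!
The map `a ↦ a, c ↦ ba` has the left inverse `M₄ → M₃`, `a ↦ a, b ↦ ac`. This inverse is well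
defined because `a(ac)a² = a(aca)a = aca = c = (ac)a` in `M₃`, and it sends `ba` to `aca = c`.
-/

open PresentedMonoid

theorem rel3_holds : of rel3 true * of rel3 false * of rel3 true = of rel3 false :=
  mk_eq_mk_of_rel ⟨rfl, rfl⟩

theorem rel4_holds : of rel4 true * of rel4 false * of rel4 true * of rel4 true =
    of rel4 false * of rel4 true :=
  mk_eq_mk_of_rel ⟨rfl, rfl⟩

section Lift

variable {M : Type*} [Monoid M]

def liftM3 (a c : M) (h : a * c * a = c) : PresentedMonoid rel3 →* M :=
  lift (fun x => bif x then a else c) (by rintro _ _ ⟨rfl, rfl⟩; simpa using h)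

def liftM4 (a b : M) (h : a * b * a * a = b * a) : PresentedMonoid rel4 →* M :=
  lift (fun x => bif x then a else b) (by rintro _ _ ⟨rfl, rfl⟩; simpa using h)

end Lift

def m3ToM4 : PresentedMonoid rel3 →* PresentedMonoid rel4 :=
  liftM3 (of rel4 true) (of rel4 false * of rel4 true) <| by
    rw [← mul_assoc]; exact rel4_holds

def m4ToM3 : PresentedMonoid rel4 →* PresentedMonoid rel3 :=
  liftM4 (of rel3 true) (of rel3 true * of rel3 false) <| by
    calc of rel3 true * (of rel3 true * of rel3 false) * of rel3 true * of rel3 true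
        = of rel3 true * (of rel3 true * of rel3 false * of rel3 true) * of rel3 true := by
          simp only [mul_assoc]
      _ = of rel3 true * of rel3 false * of rel3 true := congrArg (of rel3 true * · * _) rel3_holds

theorem m4ToM3_comp_m3ToM4 : m4ToM3.comp m3ToM4 = MonoidHom.id _ := by
  ext (_ | _)
  · exact rel3_holds
  · rfl

/-- The monoid `M₃ = ⟨a, c | aca = c⟩` embeds into `M₄ = ⟨a, b | aba² = ba⟩` via
`a ↦ a`, `c ↦ ba`. -/
theorem M3_embeds_in_M4 :
    ∃ f : PresentedMonoid rel3 →* PresentedMonoid rel4,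
      Function.Injective f ∧
        f (PresentedMonoid.of rel3 true) = PresentedMonoid.of rel4 true ∧
        f (PresentedMonoid.of rel3 false) =
          PresentedMonoid.of rel4 false * PresentedMonoid.of rel4 true := by
  refine ⟨m3ToM4, ?_, rfl, rfl⟩
  have hleft : Function.LeftInverse m4ToM3 m3ToM4 := DFunLike.congr_fun m4ToM3_comp_m3ToM4
  exact hleft.injective
end
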